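/- arXiv:2306.04595 — 9 statements merged into one kernel-verified Lean document; each statement's English description precedes it below -/
import Mathlib

section
/- (Simulator fidelity bound) Consider a finite MDP with reward r : S × A → [0, R_max], transition kernel P, discount γ ∈ [0,1), and an approximate model (r̂, P̂) with max_{s,a} |r̂(s,a) - r(s,a)| ≤ ε_R and max_{s,a} d_TV(P̂(s,a), P(s,a)) ≤ ε_P. Then for any stationary policy π, the value functions satisfy ‖V̂^π - V^π‖_∞ ≤ ε_R/(1-γ) + γ ε_P R_max/(1-γ)². -/
/-!
Under a fixed policy both models are Markov reward processes. Subtracting the two Bellman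
equations at a state `s` gives
`V̂ s - V s = (r̂ - r) + γ ⟨P̂ - P, V⟩ + γ ⟨P̂, V̂ - V⟩`.
Since `P̂ - P` has total mass zero, `⟨P̂ - P, V⟩` only sees the oscillation `R_max / (1 - γ)` of
`V`, so it is at most `ε_P R_max / (1 - γ)`, while the last term is at most `γ ‖V̂ - V‖_∞`.
Taking the supremum over `s` and solving `‖V̂ - V‖_∞ ≤ c + γ ‖V̂ - V‖_∞` gives the bound.
-/

open Finset

section FiniteSums

variable {ι : Type*} [Fintype ι]

theorem abs_sum_sub_mul_le_of_sum_eq {p q f : ι → ℝ} {lo hi : ℝ}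
    (hpq : ∑ i, p i = ∑ i, q i) (hf : ∀ i, f i ∈ Set.Icc lo hi) :
    |∑ i, (p i - q i) * f i| ≤ (1 / 2 * ∑ i, |p i - q i|) * (hi - lo) := by
  set c := (lo + hi) / 2 with hc
  have hcenter : ∑ i, (p i - q i) * f i = ∑ i, (p i - q i) * (f i - c) := by
    simp only [mul_sub, sum_sub_distrib, ← sum_mul, hpq, sub_self, zero_mul, sub_zero]
  have hdev : ∀ i, |f i - c| ≤ (hi - lo) / 2 := fun i => by
    rw [abs_sub_le_iff]; constructor <;> linarith [(hf i).1, (hf i).2, hc]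
  calc |∑ i, (p i - q i) * f i|
      ≤ ∑ i, |p i - q i| * |f i - c| := by
        rw [hcenter]
        exact (abs_sum_le_sum_abs _ _).trans_eq (sum_congr rfl fun i _ => abs_mul _ _)
    _ ≤ ∑ i, |p i - q i| * ((hi - lo) / 2) :=
        sum_le_sum fun i _ => mul_le_mul_of_nonneg_left (hdev i) (abs_nonneg _)
    _ = (1 / 2 * ∑ i, |p i - q i|) * (hi - lo) := by rw [← sum_mul]; ring

theorem abs_sum_mul_le_of_sum_eq_one {p g : ι → ℝ} {M : ℝ} (hp : ∀ i, 0 ≤ p i)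
    (hp1 : ∑ i, p i = 1) (hg : ∀ i, |g i| ≤ M) : |∑ i, p i * g i| ≤ M :=
  calc |∑ i, p i * g i| ≤ ∑ i, p i * |g i| := by
        refine (abs_sum_le_sum_abs _ _).trans_eq (sum_congr rfl fun i _ => ?_)
        rw [abs_mul, abs_of_nonneg (hp i)]
    _ ≤ ∑ i, p i * M := sum_le_sum fun i _ => mul_le_mul_of_nonneg_left (hg i) (hp i)
    _ = M := by rw [← sum_mul, hp1, one_mul]

theorem abs_le_div_of_abs_le_add_mul_norm {D : ι → ℝ} {c γ : ℝ} (hγ1 : γ < 1)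
    (hD : ∀ i, |D i| ≤ c + γ * ‖D‖) (i : ι) : |D i| ≤ c / (1 - γ) := by
  have : Nonempty ι := ⟨i⟩
  have hnorm : ‖D‖ ≤ c + γ * ‖D‖ := (pi_norm_le_iff_of_nonempty D).2 hD
  calc |D i| = ‖D i‖ := (Real.norm_eq_abs _).symm
    _ ≤ ‖D‖ := norm_le_pi_norm D i
    _ ≤ c / (1 - γ) := by rw [le_div_iff₀ (by linarith)]; linarith

end FiniteSums

section MarkovRewardProcess

variable {S : Type*} [Fintype S]

theorem abs_sub_le_add_mul_norm_of_bellman {r rhat : S → ℝ} {P Phat : S → S → ℝ}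
    {V Vhat : S → ℝ} {γ εR εP Vmax : ℝ} (hγ : 0 ≤ γ)
    (hP : ∀ s, ∑ s', P s s' = 1)
    (hPhat : ∀ s, (∀ s', 0 ≤ Phat s s') ∧ ∑ s', Phat s s' = 1)
    (hεR : ∀ s, |rhat s - r s| ≤ εR)
    (hεP : ∀ s, 1 / 2 * ∑ s', |Phat s s' - P s s'| ≤ εP)
    (hV : ∀ s, V s = r s + γ * ∑ s', P s s' * V s')
    (hVhat : ∀ s, Vhat s = rhat s + γ * ∑ s', Phat s s' * Vhat s')
    (hVbd : ∀ s, V s ∈ Set.Icc 0 Vmax) (s : S) :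
    |Vhat s - V s| ≤ εR + γ * (εP * Vmax) + γ * ‖Vhat - V‖ := by
  have hdecomp : Vhat s - V s = (rhat s - r s) + γ * ∑ s', (Phat s s' - P s s') * V s'
      + γ * ∑ s', Phat s s' * (Vhat s' - V s') := by
    simp only [sub_mul, mul_sub, sum_sub_distrib]
    rw [hV s, hVhat s]
    ring
  have htransition : |∑ s', (Phat s s' - P s s') * V s'| ≤ εP * Vmax := by
    have hmass : ∑ s', Phat s s' = ∑ s', P s s' := by rw [(hPhat s).2, hP s]
    calc |∑ s', (Phat s s' - P s s') * V s'|
        ≤ (1 / 2 * ∑ s', |Phat s s' - P s s'|) * (Vmax - 0) :=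
          abs_sum_sub_mul_le_of_sum_eq hmass hVbd
      _ ≤ εP * Vmax := by
          rw [sub_zero]
          exact mul_le_mul_of_nonneg_right (hεP s) ((hVbd s).1.trans (hVbd s).2)
  have hpropagated : |∑ s', Phat s s' * (Vhat s' - V s')| ≤ ‖Vhat - V‖ :=
    abs_sum_mul_le_of_sum_eq_one (hPhat s).1 (hPhat s).2 fun s' =>
      (Real.norm_eq_abs _).symm.trans_le (norm_le_pi_norm (Vhat - V) s')
  rw [hdecomp]
  refine (abs_add_three _ _ _).trans ?_
  rw [abs_mul, abs_mul, abs_of_nonneg hγ]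
  gcongr
  exact hεR s

end MarkovRewardProcess

theorem simulator_fidelity_bound_general {S A : Type*} [Fintype S] [Fintype A]
    (r rhat : S → A → ℝ) (P Phat : S → A → S → ℝ) (π : S → A)
    (γ Rmax εR εP : ℝ) (V Vhat : S → ℝ)
    (hγ : 0 ≤ γ) (hγ1 : γ < 1)
    (hP : ∀ s a, (∀ s', 0 ≤ P s a s') ∧ ∑ s', P s a s' = 1)
    (hPhat : ∀ s a, (∀ s', 0 ≤ Phat s a s') ∧ ∑ s', Phat s a s' = 1)
    (hεR : ∀ s a, |rhat s a - r s a| ≤ εR)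
    (hεP : ∀ s a, (1 / 2) * ∑ s', |Phat s a s' - P s a s'| ≤ εP)
    (hV : ∀ s, V s = r s (π s) + γ * ∑ s', P s (π s) s' * V s')
    (hVhat : ∀ s, Vhat s = rhat s (π s) + γ * ∑ s', Phat s (π s) s' * Vhat s')
    (hVbd : ∀ s, 0 ≤ V s ∧ V s ≤ Rmax / (1 - γ)) :
    ∀ s, |Vhat s - V s| ≤ εR / (1 - γ) + γ * εP * Rmax / (1 - γ) ^ 2 := by
  intro s
  have hstep := abs_sub_le_add_mul_norm_of_bellman (r := fun s => r s (π s))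
    (P := fun s => P s (π s)) (Phat := fun s => Phat s (π s)) hγ (fun s => (hP s (π s)).2)
    (fun s => hPhat s (π s)) (fun s => hεR s (π s)) (fun s => hεP s (π s)) hV hVhat hVbd
  calc |Vhat s - V s| ≤ (εR + γ * (εP * (Rmax / (1 - γ)))) / (1 - γ) :=
        abs_le_div_of_abs_le_add_mul_norm (D := Vhat - V) hγ1 hstep s
    _ = εR / (1 - γ) + γ * εP * Rmax / (1 - γ) ^ 2 := by
        have : 1 - γ ≠ 0 := by linarith
        field_simp

/-- Simulator fidelity bound: if the approximate model's rewards are `ε_R`-accurate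
and its transitions are `ε_P`-accurate in total variation, then the value functions of
any stationary policy under the true and approximate models are uniformly close. -/
theorem simulator_fidelity_bound {S A : Type*} [Fintype S] [Fintype A]
    (r rhat : S → A → ℝ) (P Phat : S → A → S → ℝ) (π : S → A)
    (γ Rmax εR εP : ℝ) (V Vhat : S → ℝ)
    (hγ : 0 ≤ γ) (hγ1 : γ < 1) (hR : 0 ≤ Rmax)
    (hr : ∀ s a, 0 ≤ r s a ∧ r s a ≤ Rmax)
    (hrhat : ∀ s a, 0 ≤ rhat s a ∧ rhat s a ≤ Rmax)
    (hP : ∀ s a, (∀ s', 0 ≤ P s a s') ∧ ∑ s', P s a s' = 1)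
    (hPhat : ∀ s a, (∀ s', 0 ≤ Phat s a s') ∧ ∑ s', Phat s a s' = 1)
    (hεR : ∀ s a, |rhat s a - r s a| ≤ εR)
    (hεP : ∀ s a, (1 / 2) * ∑ s', |Phat s a s' - P s a s'| ≤ εP)
    (hV : ∀ s, V s = r s (π s) + γ * ∑ s', P s (π s) s' * V s')
    (hVhat : ∀ s, Vhat s = rhat s (π s) + γ * ∑ s', Phat s (π s) s' * Vhat s')
    (hVbd : ∀ s, 0 ≤ V s ∧ V s ≤ Rmax / (1 - γ))
    (hVhatbd : ∀ s, 0 ≤ Vhat s ∧ Vhat s ≤ Rmax / (1 - γ)) :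
    ∀ s, |Vhat s - V s| ≤ εR / (1 - γ) + γ * εP * Rmax / (1 - γ) ^ 2 :=
  simulator_fidelity_bound_general r rhat P Phat π γ Rmax εR εP V Vhat hγ hγ1 hP hPhat hεR hεP hV
    hVhat hVbd
end

section
/- Let F : met → met be the operator F(d)(sᵢ, sⱼ) = (1-c)|r(sᵢ) - r(sⱼ)| + c · W₁(d)(P(sᵢ), P(sⱼ)) on the space of bounded pseudometrics on a finite set S, where W₁(d) is the 1-Wasserstein distance with ground metric d. Then F is a c-contraction in the sup norm on pseudometrics, for any c ∈ [0,1). -/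
/-! The Wasserstein distance is 1-Lipschitz in its ground cost for the sup norm: on every
coupling `γ` of two probability distributions, changing the cost by at most `K` pointwise
changes the expected cost by at most `K`, because `γ` has total mass one.
Since the reward term of `F` does not depend on `d`, `F` then inherits
the factor `c` in front of `W₁`. -/

open Finset
noncomputable section

/-- The 1-Wasserstein distance between two distributions `μ ν` on a finite set `S`
with ground cost `d`, as the infimum over couplings of the expected cost. -/
def W1 {S : Type*} [Fintype S] (d : S → S → ℝ) (μ ν : S → ℝ) : ℝ :=
  sInf {v : ℝ | ∃ c : S → S → ℝ, (∀ x y, 0 ≤ c x y) ∧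
    (∀ x, ∑ y, c x y = μ x) ∧ (∀ y, ∑ x, c x y = ν y) ∧
    v = ∑ x, ∑ y, d x y * c x y}

namespace W1

variable {S : Type*} [Fintype S]

def IsCoupling (μ ν : S → ℝ) (γ : S → S → ℝ) : Prop :=
  (∀ x y, 0 ≤ γ x y) ∧ (∀ x, ∑ y, γ x y = μ x) ∧ (∀ y, ∑ x, γ x y = ν y)

def couplingCost (d γ : S → S → ℝ) : ℝ :=
  ∑ x, ∑ y, d x y * γ x y

def couplingCosts (d : S → S → ℝ) (μ ν : S → ℝ) : Set ℝ :=
  couplingCost d '' {γ | IsCoupling μ ν γ}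

theorem eq_sInf_couplingCosts (d : S → S → ℝ) (μ ν : S → ℝ) :
    W1 d μ ν = sInf (couplingCosts d μ ν) := by
  unfold W1 couplingCosts
  congr 1
  ext v
  simp only [Set.mem_ofPred_eq, Set.mem_image, IsCoupling, couplingCost, and_assoc, eq_comm]

theorem isCoupling_mul {μ ν : S → ℝ} (hμ0 : ∀ x, 0 ≤ μ x) (hμ1 : ∑ x, μ x = 1)
    (hν0 : ∀ y, 0 ≤ ν y) (hν1 : ∑ y, ν y = 1) :
    IsCoupling μ ν fun x y => μ x * ν y :=
  ⟨fun x y => mul_nonneg (hμ0 x) (hν0 y),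
    fun x => by rw [← mul_sum, hν1, mul_one],
    fun y => by rw [← sum_mul, hμ1, one_mul]⟩

theorem IsCoupling.couplingCost_le_add {μ ν : S → ℝ} {γ : S → S → ℝ}
    (hγ : IsCoupling μ ν γ) (hμ1 : ∑ x, μ x = 1) {d₁ d₂ : S → S → ℝ} {K : ℝ}
    (hK : ∀ x y, d₁ x y ≤ d₂ x y + K) :
    couplingCost d₁ γ ≤ couplingCost d₂ γ + K := by
  obtain ⟨hγ0, hγμ, -⟩ := hγ
  have hmass : ∑ x, ∑ y, γ x y = 1 := by simp only [hγμ, hμ1]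
  calc couplingCost d₁ γ
      ≤ ∑ x, ∑ y, (d₂ x y + K) * γ x y :=
        sum_le_sum fun x _ => sum_le_sum fun y _ =>
          mul_le_mul_of_nonneg_right (hK x y) (hγ0 x y)
    _ = couplingCost d₂ γ + K * ∑ x, ∑ y, γ x y := by
        simp only [couplingCost, add_mul, sum_add_distrib, mul_sum]
    _ = couplingCost d₂ γ + K := by rw [hmass, mul_one]

theorem bddBelow_couplingCosts (d : S → S → ℝ) {μ ν : S → ℝ} (hμ1 : ∑ x, μ x = 1) :
    BddBelow (couplingCosts d μ ν) := by
  obtain ⟨m, hm⟩ := (Set.finite_range fun p : S × S => d p.1 p.2).bddBelow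
  refine ⟨m, Set.forall_mem_image.2 fun γ hγ => ?_⟩
  have h := hγ.couplingCost_le_add hμ1 (d₁ := 0) (d₂ := d) (K := -m)
    fun x y => by simpa using hm ⟨(x, y), rfl⟩
  simp only [couplingCost, Pi.zero_apply, zero_mul, sum_const_zero] at h ⊢
  linarith

theorem le_add_of_cost_le_add {μ ν : S → ℝ} (hμ0 : ∀ x, 0 ≤ μ x) (hμ1 : ∑ x, μ x = 1)
    (hν0 : ∀ y, 0 ≤ ν y) (hν1 : ∑ y, ν y = 1) {d₁ d₂ : S → S → ℝ} {K : ℝ}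
    (hK : ∀ x y, d₁ x y ≤ d₂ x y + K) :
    W1 d₁ μ ν ≤ W1 d₂ μ ν + K := by
  rw [eq_sInf_couplingCosts, eq_sInf_couplingCosts, ← sub_le_iff_le_add]
  have hne : (couplingCosts d₂ μ ν).Nonempty :=
    ⟨_, Set.mem_image_of_mem _ (isCoupling_mul hμ0 hμ1 hν0 hν1)⟩
  refine le_csInf hne (Set.forall_mem_image.2 fun γ hγ => sub_le_iff_le_add.2 ?_)
  exact (csInf_le (bddBelow_couplingCosts d₁ hμ1) (Set.mem_image_of_mem _ hγ)).trans
    (hγ.couplingCost_le_add hμ1 hK)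

theorem abs_sub_le_of_cost_abs_sub_le {μ ν : S → ℝ} (hμ0 : ∀ x, 0 ≤ μ x)
    (hμ1 : ∑ x, μ x = 1) (hν0 : ∀ y, 0 ≤ ν y) (hν1 : ∑ y, ν y = 1) {d₁ d₂ : S → S → ℝ} {K : ℝ}
    (hK : ∀ x y, |d₁ x y - d₂ x y| ≤ K) :
    |W1 d₁ μ ν - W1 d₂ μ ν| ≤ K := by
  have h₁₂ : W1 d₁ μ ν ≤ W1 d₂ μ ν + K := le_add_of_cost_le_add hμ0 hμ1 hν0 hν1
    fun x y => by linarith [(abs_le.1 (hK x y)).2]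
  have h₂₁ : W1 d₂ μ ν ≤ W1 d₁ μ ν + K := le_add_of_cost_le_add hμ0 hμ1 hν0 hν1
    fun x y => by linarith [(abs_le.1 (hK x y)).1]
  exact abs_le.2 ⟨by linarith, by linarith⟩

end W1

theorem bisim_operator_contraction_general {S : Type*} [Fintype S]
    (r : S → ℝ) (P : S → S → ℝ) (c : ℝ) (hc0 : 0 ≤ c)
    (hP : ∀ s, (∀ s', 0 ≤ P s s') ∧ ∑ s', P s s' = 1)
    (d₁ d₂ : S → S → ℝ)
    (F : (S → S → ℝ) → S → S → ℝ)
    (hF : ∀ d si sj, F d si sj = (1 - c) * |r si - r sj| + c * W1 d (P si) (P sj)) :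
    ∀ si sj, |F d₁ si sj - F d₂ si sj| ≤ c * ⨆ p : S × S, |d₁ p.1 p.2 - d₂ p.1 p.2| := by
  intro si sj
  have hdist : ∀ x y, |d₁ x y - d₂ x y| ≤ ⨆ p : S × S, |d₁ p.1 p.2 - d₂ p.1 p.2| :=
    fun x y => le_ciSup (f := fun p : S × S => |d₁ p.1 p.2 - d₂ p.1 p.2|)
      (Set.finite_range _).bddAbove (x, y)
  have hW := W1.abs_sub_le_of_cost_abs_sub_le (hP si).1 (hP si).2 (hP sj).1 (hP sj).2 hdist
  calc |F d₁ si sj - F d₂ si sj|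
      = c * |W1 d₁ (P si) (P sj) - W1 d₂ (P si) (P sj)| := by
        rw [hF, hF, add_sub_add_left_eq_sub, ← mul_sub, abs_mul, abs_of_nonneg hc0]
    _ ≤ c * ⨆ p : S × S, |d₁ p.1 p.2 - d₂ p.1 p.2| := mul_le_mul_of_nonneg_left hW hc0

/-- The bisimulation operator
`F(d)(sᵢ,sⱼ) = (1-c)|r(sᵢ)-r(sⱼ)| + c · W₁(d)(P(sᵢ),P(sⱼ))`
is a `c`-contraction in the sup norm on the space of bounded pseudometrics. -/
theorem bisim_operator_contraction {S : Type*} [Fintype S] [Nonempty S]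
    (r : S → ℝ) (P : S → S → ℝ) (c : ℝ) (hc0 : 0 ≤ c) (hc1 : c < 1)
    (hP : ∀ s, (∀ s', 0 ≤ P s s') ∧ ∑ s', P s s' = 1)
    (d₁ d₂ : S → S → ℝ)
    (hd₁self : ∀ x, d₁ x x = 0) (hd₁symm : ∀ x y, d₁ x y = d₁ y x)
    (hd₁tri : ∀ x y z, d₁ x z ≤ d₁ x y + d₁ y z)
    (hd₂self : ∀ x, d₂ x x = 0) (hd₂symm : ∀ x y, d₂ x y = d₂ y x)
    (hd₂tri : ∀ x y z, d₂ x z ≤ d₂ x y + d₂ y z)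
    (F : (S → S → ℝ) → S → S → ℝ)
    (hF : ∀ d si sj, F d si sj = (1 - c) * |r si - r sj| + c * W1 d (P si) (P sj)) :
    ∀ si sj, |F d₁ si sj - F d₂ si sj| ≤ c * ⨆ p : S × S, |d₁ p.1 p.2 - d₂ p.1 p.2| :=
  bisim_operator_contraction_general r P c hc0 hP d₁ d₂ F hF
end
end

section
/- Let d be the bisimulation metric, i.e., the unique fixed point of F(d)(sᵢ,sⱼ) = (1-c)|r(sᵢ)-r(sⱼ)| + c·W₁(d)(P(sᵢ),P(sⱼ)) for a policy-fixed Markov reward process on finite S with rewards in [0, R_max]. Then for all sᵢ, sⱼ: (1-c)·|V(sᵢ) - V(sⱼ)| ≤ d(sᵢ, sⱼ), where V is the value function with discount factor c. -/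
/-! The value difference `V sᵢ - V sⱼ` is the reward difference plus `c` times the difference
of the expectations of `V` under `P sᵢ` and `P sⱼ`. Evaluating the latter along an arbitrary
coupling (the easy half of Kantorovich duality) shows: if `(1 - c)|V x - V y| ≤ d x y + M` for
all pairs, the fixed-point equation of `d` improves the slack `M` to `c * M`. Applied to the
largest slack, this forces it to be nonpositive since `c < 1`. -/

open Finset
noncomputable section

section Coupling

variable {S : Type*} [Fintype S]

theorem abs_dotProduct_sub_le_of_coupling {μ ν f : S → ℝ} {γ : S → S → ℝ}
    (hγ : ∀ x y, 0 ≤ γ x y) (hμ : ∀ x, ∑ y, γ x y = μ x) (hν : ∀ y, ∑ x, γ x y = ν y) :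
    |μ ⬝ᵥ f - ν ⬝ᵥ f| ≤ ∑ x, ∑ y, |f x - f y| * γ x y := by
  have hdiff : μ ⬝ᵥ f - ν ⬝ᵥ f = ∑ x, ∑ y, (f x - f y) * γ x y := by
    simp only [dotProduct, ← hμ, ← hν, sum_mul, sub_mul, sum_sub_distrib, mul_comm (f _)]
    rw [sum_comm (s := univ) (t := univ) (f := fun y x => γ x y * f y)]
  calc |μ ⬝ᵥ f - ν ⬝ᵥ f| ≤ ∑ x, ∑ y, |(f x - f y) * γ x y| := by
        rw [hdiff]
        exact (abs_sum_le_sum_abs _ _).trans (sum_le_sum fun x _ => abs_sum_le_sum_abs _ _)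
    _ = ∑ x, ∑ y, |f x - f y| * γ x y := by
        simp only [abs_mul, abs_of_nonneg (hγ _ _)]

theorem abs_dotProduct_sub_le_W1_add {d : S → S → ℝ} {μ ν f : S → ℝ} {M : ℝ}
    (hμ : ∀ x, 0 ≤ μ x) (hμ1 : ∑ x, μ x = 1) (hν : ∀ y, 0 ≤ ν y) (hν1 : ∑ y, ν y = 1)
    (hf : ∀ x y, |f x - f y| ≤ d x y + M) :
    |μ ⬝ᵥ f - ν ⬝ᵥ f| ≤ W1 d μ ν + M := by
  rw [← sub_le_iff_le_add]
  refine le_csInf ⟨_, fun x y => μ x * ν y, fun x y => mul_nonneg (hμ x) (hν y),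
    fun x => by rw [← mul_sum, hν1, mul_one], fun y => by rw [← sum_mul, hμ1, one_mul], rfl⟩ ?_
  rintro _ ⟨γ, hγ, hγμ, hγν, rfl⟩
  have hmass : ∑ x, ∑ y, γ x y = 1 := by simp only [hγμ, hμ1]
  calc |μ ⬝ᵥ f - ν ⬝ᵥ f| - M ≤ ∑ x, ∑ y, (d x y + M) * γ x y - M := by
        gcongr
        refine (abs_dotProduct_sub_le_of_coupling hγ hγμ hγν).trans ?_
        gcongr with x _ y _
        exacts [hγ x y, hf x y]
    _ = ∑ x, ∑ y, d x y * γ x y := by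
        simp only [add_mul, sum_add_distrib, ← mul_sum, hmass, mul_one, add_sub_cancel_right]

end Coupling

theorem nonpos_of_le_mul_of_forall_le {ι : Type*} [Finite ι] {g : ι → ℝ} {c : ℝ} (hc1 : c < 1)
    (h : ∀ M, (∀ i, g i ≤ M) → ∀ i, g i ≤ c * M) (i : ι) : g i ≤ 0 := by
  have : Nonempty ι := ⟨i⟩
  obtain ⟨i₀, hi₀⟩ := Finite.exists_max g
  have hmax : g i₀ ≤ c * g i₀ := h _ hi₀ i₀
  have : g i₀ ≤ 0 := by nlinarith
  exact (hi₀ i).trans this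

theorem scaled_value_diff_le_add_mul {S : Type*} [Fintype S] {r V : S → ℝ} {P d : S → S → ℝ}
    {c M : ℝ} (hc0 : 0 ≤ c) (hc1 : c < 1)
    (hP : ∀ s, (∀ s', 0 ≤ P s s') ∧ ∑ s', P s s' = 1)
    (hfix : ∀ si sj, d si sj = (1 - c) * |r si - r sj| + c * W1 d (P si) (P sj))
    (hV : ∀ s, V s = r s + c * P s ⬝ᵥ V)
    (hM : ∀ x y, (1 - c) * |V x - V y| ≤ d x y + M) (si sj : S) :
    (1 - c) * |V si - V sj| ≤ d si sj + c * M := by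
  have h1c : 0 ≤ 1 - c := by linarith
  have hW : |P si ⬝ᵥ ((1 - c) • V) - P sj ⬝ᵥ ((1 - c) • V)| ≤ W1 d (P si) (P sj) + M :=
    abs_dotProduct_sub_le_W1_add (hP si).1 (hP si).2 (hP sj).1 (hP sj).2 fun x y => by
      simpa only [Pi.smul_apply, smul_eq_mul, ← mul_sub, abs_mul, abs_of_nonneg h1c] using hM x y
  rw [dotProduct_smul, dotProduct_smul, smul_eq_mul, smul_eq_mul, ← mul_sub, abs_mul,
    abs_of_nonneg h1c] at hW
  calc (1 - c) * |V si - V sj|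
      = (1 - c) * |(r si - r sj) + c * (P si ⬝ᵥ V - P sj ⬝ᵥ V)| := by rw [hV si, hV sj]; ring_nf
    _ ≤ (1 - c) * |r si - r sj| + c * ((1 - c) * |P si ⬝ᵥ V - P sj ⬝ᵥ V|) := by
        have := abs_add_le (r si - r sj) (c * (P si ⬝ᵥ V - P sj ⬝ᵥ V))
        rw [abs_mul, abs_of_nonneg hc0] at this
        nlinarith
    _ ≤ (1 - c) * |r si - r sj| + c * (W1 d (P si) (P sj) + M) := by gcongr
    _ = d si sj + c * M := by rw [hfix]; ring

theorem bisim_metric_bounds_value_diff_general {S : Type*} [Fintype S]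
    (r : S → ℝ) (P : S → S → ℝ) (c : ℝ) (hc0 : 0 ≤ c) (hc1 : c < 1)
    (hP : ∀ s, (∀ s', 0 ≤ P s s') ∧ ∑ s', P s s' = 1)
    (d : S → S → ℝ)
    (hfix : ∀ si sj, d si sj = (1 - c) * |r si - r sj| + c * W1 d (P si) (P sj))
    (V : S → ℝ) (hV : ∀ s, V s = r s + c * ∑ s', P s s' * V s') :
    ∀ si sj, (1 - c) * |V si - V sj| ≤ d si sj := by
  intro si sj
  have hstep : ∀ M, (∀ p : S × S, (1 - c) * |V p.1 - V p.2| - d p.1 p.2 ≤ M) →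
      ∀ p : S × S, (1 - c) * |V p.1 - V p.2| - d p.1 p.2 ≤ c * M := fun M hM p => by
    have := scaled_value_diff_le_add_mul (M := M) hc0 hc1 hP hfix hV
      (fun x y => by linarith [hM (x, y)]) p.1 p.2
    linarith
  linarith [nonpos_of_le_mul_of_forall_le hc1 hstep (si, sj)]

/-- The bisimulation metric upper-bounds the (scaled) value difference:
`(1-c)|V(sᵢ) - V(sⱼ)| ≤ d(sᵢ,sⱼ)` where `V` is the value function of the
Markov reward process with discount factor `c`. -/
theorem bisim_metric_bounds_value_diff {S : Type*} [Fintype S] [Nonempty S]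
    (r : S → ℝ) (P : S → S → ℝ) (c Rmax : ℝ) (hc0 : 0 ≤ c) (hc1 : c < 1)
    (hr : ∀ s, 0 ≤ r s ∧ r s ≤ Rmax)
    (hP : ∀ s, (∀ s', 0 ≤ P s s') ∧ ∑ s', P s s' = 1)
    (d : S → S → ℝ)
    (hfix : ∀ si sj, d si sj = (1 - c) * |r si - r sj| + c * W1 d (P si) (P sj))
    (V : S → ℝ) (hV : ∀ s, V s = r s + c * ∑ s', P s s' * V s') :
    ∀ si sj, (1 - c) * |V si - V sj| ≤ d si sj :=
  bisim_metric_bounds_value_diff_general r P c hc0 hc1 hP d hfix V hV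
end
end

section
/- Let ≡_B be a bisimulation relation on a finite MDP: sᵢ ≡_B sⱼ implies r(sᵢ,a) = r(sⱼ,a) for all actions a, and P(G | sᵢ, a) = P(G | sⱼ, a) for all a and all equivalence classes G of B. Then bisimilar states have equal optimal value: sᵢ ≡_B sⱼ implies V*(sᵢ) = V*(sⱼ). -/
/-!
Let `D` be the largest value gap `V x - V y` over bisimilar pairs. Functions constant on
bisimulation classes have the same expectation under the transition laws of two bisimilar
states, and `V` minus its class-wise minimum lies in `[0, D]`; so the expected next values of
bisimilar states differ by at most `D`, rewards agree, and the Bellman equation gives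
`D ≤ γ D`, i.e. `D ≤ 0`.
-/

open Finset Classical
noncomputable section
open scoped Classical

theorem sum_mul_eq_sum_mul_of_classwise_sum_eq {S R : Type*} [Fintype S]
    [NonUnitalNonAssocSemiring R] {B : S → S → Prop} (hB : Equivalence B) {p q : S → R}
    (hpq : ∀ t, ∑ s ∈ univ.filter (B t ·), p s = ∑ s ∈ univ.filter (B t ·), q s)
    {f : S → R} (hf : ∀ u v, B u v → f u = f v) :
    ∑ s, p s * f s = ∑ s, q s * f s := by
  let st : Setoid S := ⟨B, hB⟩
  have sum_fiber (w : S → R) (c : Quotient st) :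
      ∑ s ∈ univ.filter (fun s => Quotient.mk st s = c), w s * f s =
        (∑ s ∈ univ.filter (B c.out ·), w s) * f c.out := by
    rw [sum_mul]
    refine sum_congr ?_ fun s hs => ?_
    · ext s
      simpa [Quotient.mk_eq_iff_out] using ⟨hB.symm, hB.symm⟩
    · simp only [mem_filter, mem_univ, true_and] at hs
      rw [hf _ _ (hB.symm hs)]
  rw [← sum_fiberwise univ (Quotient.mk st), ← sum_fiberwise univ (Quotient.mk st)]
  simp only [sum_fiber, hpq]

theorem exists_classwise_const_attained_le {S : Type*} [Fintype S] {B : S → S → Prop}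
    (hB : Equivalence B) (V : S → ℝ) :
    ∃ g : S → ℝ, (∀ u v, B u v → g u = g v) ∧ ∀ s, ∃ u, B s u ∧ g s = V u ∧ V u ≤ V s := by
  have hne (s : S) : (univ.filter (B s ·)).Nonempty := ⟨s, by simp [hB.refl s]⟩
  refine ⟨fun s => (univ.filter (B s ·)).inf' (hne s) V, fun u v huv => ?_, fun s => ?_⟩
  · have : univ.filter (B u ·) = univ.filter (B v ·) := by
      ext w
      simpa using ⟨hB.trans (hB.symm huv), hB.trans huv⟩
    simp only [this]
  · obtain ⟨u, hu, hgu⟩ := exists_mem_eq_inf' (hne s) V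
    exact ⟨u, by simpa using hu, hgu, hgu ▸ inf'_le V (by simp [hB.refl s])⟩

theorem sum_mul_sub_sum_mul_le_of_classwise_sum_eq {S : Type*} [Fintype S]
    {B : S → S → Prop} (hB : Equivalence B) {p q : S → ℝ} (hp : ∀ s, 0 ≤ p s)
    (hq : ∀ s, 0 ≤ q s)
    (hpq : ∀ t, ∑ s ∈ univ.filter (B t ·), p s = ∑ s ∈ univ.filter (B t ·), q s)
    {V : S → ℝ} {c : ℝ} (hV : ∀ u v, B u v → V u - V v ≤ c) :
    ∑ s, p s * V s - ∑ s, q s * V s ≤ c * ∑ s, p s := by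
  obtain ⟨g, hg, hgV⟩ := exists_classwise_const_attained_le hB V
  have hp_le : ∑ s, p s * (V s - g s) ≤ c * ∑ s, p s := by
    rw [mul_sum]
    refine sum_le_sum fun s _ => ?_
    obtain ⟨u, hsu, hgu, -⟩ := hgV s
    rw [mul_comm c, hgu]
    exact mul_le_mul_of_nonneg_left (hV s u hsu) (hp s)
  have hq_nonneg : 0 ≤ ∑ s, q s * (V s - g s) := by
    refine sum_nonneg fun s _ => mul_nonneg (hq s) ?_
    obtain ⟨u, -, hgu, huV⟩ := hgV s
    linarith
  have hg_eq := sum_mul_eq_sum_mul_of_classwise_sum_eq hB hpq hg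
  simp only [mul_sub, sum_sub_distrib] at hp_le hq_nonneg
  linarith

theorem ciSup_sub_ciSup_le {ι : Type*} [Finite ι] [Nonempty ι] {f g : ι → ℝ} {c : ℝ}
    (h : ∀ i, f i - g i ≤ c) : (⨆ i, f i) - ⨆ i, g i ≤ c :=
  sub_le_iff_le_add.2 <| ciSup_le fun i =>
    (sub_le_iff_le_add.1 (h i)).trans <| add_le_add_right (le_ciSup (Finite.bddAbove_range g) i) c

theorem forall_nonpos_of_bound_contracts {ι : Type*} [Finite ι] {f : ι → ℝ} {γ : ℝ}
    (hγ : γ < 1) (h : ∀ c, (∀ i, f i ≤ c) → ∀ i, f i ≤ γ * c) (i : ι) : f i ≤ 0 := by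
  have : Nonempty ι := ⟨i⟩
  obtain ⟨j, hj⟩ := Finite.exists_max f
  have hfj : f j ≤ γ * f j := h (f j) hj j
  nlinarith [hj i]

theorem bellman_sub_le_of_bisimilar {S A : Type*} [Fintype S] [Fintype A] [Nonempty A]
    {r : S → A → ℝ} {P : S → A → S → ℝ} {γ : ℝ} (hγ : 0 ≤ γ)
    (hP : ∀ s a, (∀ s', 0 ≤ P s a s') ∧ ∑ s', P s a s' = 1)
    {B : S → S → Prop} (hB : Equivalence B)
    (hBr : ∀ si sj, B si sj → ∀ a, r si a = r sj a)
    (hBP : ∀ si sj, B si sj → ∀ a (t : S),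
      ∑ s' ∈ univ.filter (fun s' => B t s'), P si a s' =
      ∑ s' ∈ univ.filter (fun s' => B t s'), P sj a s')
    {V : S → ℝ} {c : ℝ} (hc : ∀ u v, B u v → V u - V v ≤ c) {x y : S} (hxy : B x y) :
    (⨆ a, (r x a + γ * ∑ s', P x a s' * V s')) - ⨆ a, (r y a + γ * ∑ s', P y a s' * V s')
      ≤ γ * c := by
  refine ciSup_sub_ciSup_le fun a => ?_
  have hE := sum_mul_sub_sum_mul_le_of_classwise_sum_eq hB (hP x a).1 (hP y a).1
    (hBP x y hxy a) hc
  rw [(hP x a).2, mul_one] at hE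
  rw [hBr x y hxy a, add_sub_add_left_eq_sub, ← mul_sub]
  exact mul_le_mul_of_nonneg_left hE hγ

/-- Bisimilar states of a finite MDP have equal optimal value. -/
theorem bisimulation_optimal_value_eq {S A : Type*} [Fintype S] [Fintype A] [Nonempty A]
    (r : S → A → ℝ) (P : S → A → S → ℝ) (γ : ℝ)
    (hγ : 0 ≤ γ) (hγ1 : γ < 1)
    (hP : ∀ s a, (∀ s', 0 ≤ P s a s') ∧ ∑ s', P s a s' = 1)
    (B : S → S → Prop) (hB : Equivalence B)
    -- bisimilar states have equal rewards for every action
    (hBr : ∀ si sj, B si sj → ∀ a, r si a = r sj a)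
    -- bisimilar states have equal transition mass to every equivalence class
    (hBP : ∀ si sj, B si sj → ∀ a (t : S),
      ∑ s' ∈ univ.filter (fun s' => B t s'), P si a s' =
      ∑ s' ∈ univ.filter (fun s' => B t s'), P sj a s')
    (Vstar : S → ℝ)
    (hV : ∀ s, Vstar s = ⨆ a, (r s a + γ * ∑ s', P s a s' * Vstar s')) :
    ∀ si sj, B si sj → Vstar si = Vstar sj := by
  have gap_nonpos : ∀ p : {p : S × S // B p.1 p.2}, Vstar p.1.1 - Vstar p.1.2 ≤ 0 := by
    refine forall_nonpos_of_bound_contracts hγ1 fun c hc ⟨(x, y), hxy⟩ => ?_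
    rw [hV x, hV y]
    exact bellman_sub_le_of_bisimilar hγ hP hB hBr hBP (fun u v huv => hc ⟨(u, v), huv⟩) hxy
  intro si sj hij
  have h₁ := gap_nonpos ⟨(si, sj), hij⟩
  have h₂ := gap_nonpos ⟨(sj, si), hB.symm hij⟩
  dsimp only at h₁ h₂
  linarith
end
end

section
/- Let ≡_B be a bisimulation relation on a finite MDP. Then for any deterministic policy π that is B-invariant (i.e., π(sᵢ) = π(sⱼ) whenever sᵢ ≡_B sⱼ), bisimilar states have equal values: sᵢ ≡_B sⱼ implies V^π(sᵢ) = V^π(sⱼ). -/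
open Finset Classical
noncomputable section
open scoped Classical

/-!
The policy-evaluation operator `V ↦ r(·, π ·) + γ P_π V` is a `γ`-contraction for the sup norm,
so by Banach's theorem it has exactly one fixed point, and that fixed point lies in every nonempty
closed set the operator maps into itself. For a bisimulation `B` and a `B`-invariant policy, the
`B`-invariant value functions form such a set: rewards agree on bisimilar states, and since
bisimilar states put the same mass on every class, they give the same expectation to a
`B`-invariant function.
-/

theorem ContractingWith.mem_of_isFixedPt {α : Type*} [MetricSpace α] [CompleteSpace α]
    {K : NNReal} {f : α → α} (hf : ContractingWith K f) {s : Set α} (hs : IsClosed s)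
    (hsf : Set.MapsTo f s s) (hne : s.Nonempty) {x : α} (hx : Function.IsFixedPt f x) :
    x ∈ s := by
  obtain ⟨y, hy⟩ := hne
  obtain ⟨z, hzs, hz, -⟩ :=
    ContractingWith.exists_fixedPoint' hs.isComplete hsf (hf.restrict hsf) hy (edist_ne_top _ _)
  rwa [hf.fixedPoint_unique' hx hz]

section Invariant

variable {S : Type*} {B : S → S → Prop}

def invariantFunctions (B : S → S → Prop) : Set (S → ℝ) :=
  {V | ∀ x y, B x y → V x = V y}

theorem isClosed_invariantFunctions : IsClosed (invariantFunctions B) := by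
  simp only [invariantFunctions, Set.ofPred_forall]
  exact isClosed_iInter fun x => isClosed_iInter fun y => isClosed_iInter fun _ =>
    isClosed_eq (continuous_apply x) (continuous_apply y)

theorem zero_mem_invariantFunctions : (0 : S → ℝ) ∈ invariantFunctions B :=
  fun _ _ _ => rfl

variable [Fintype S]

theorem sum_mul_eq_of_sum_class_eq (hB : Equivalence B) {μ ν f : S → ℝ}
    (hμν : ∀ t, ∑ s ∈ univ.filter (fun s => B t s), μ s = ∑ s ∈ univ.filter (fun s => B t s), ν s)
    (hf : f ∈ invariantFunctions B) :
    ∑ s, μ s * f s = ∑ s, ν s * f s := by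
  let R : Setoid S := ⟨B, hB⟩
  have sum_class : ∀ (w : S → ℝ) (t : S),
      ∑ s ∈ univ.filter (fun s => (⟦s⟧ : Quotient R) = ⟦t⟧), w s * f s =
        f t * ∑ s ∈ univ.filter (fun s => B t s), w s := by
    intro w t
    rw [mul_sum]
    refine sum_congr (filter_congr fun s _ => Quotient.eq.trans ⟨hB.symm, hB.symm⟩) fun s hs => ?_
    rw [hf t s (mem_filter.1 hs).2, mul_comm]
  rw [← sum_fiberwise univ (fun s => (⟦s⟧ : Quotient R)),
    ← sum_fiberwise univ (fun s => (⟦s⟧ : Quotient R))]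
  refine sum_congr rfl fun q _ => q.inductionOn fun t => ?_
  rw [sum_class, sum_class, hμν]

end Invariant

section PolicyEvaluation

variable {S : Type*} [Fintype S]

def bellmanEval (R : S → ℝ) (K : S → S → ℝ) (γ : ℝ) (V : S → ℝ) : S → ℝ :=
  fun s => R s + γ * ∑ s', K s s' * V s'

theorem abs_sum_mul_sub_le_dist {K : S → S → ℝ} (hK0 : ∀ s s', 0 ≤ K s s')
    (hK1 : ∀ s, ∑ s', K s s' ≤ 1) (V W : S → ℝ) (s : S) :
    |∑ s', K s s' * V s' - ∑ s', K s s' * W s'| ≤ dist V W := calc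
  _ = |∑ s', K s s' * (V s' - W s')| := by simp only [mul_sub, sum_sub_distrib]
  _ ≤ ∑ s', K s s' * |V s' - W s'| := by
    refine (abs_sum_le_sum_abs _ _).trans_eq (sum_congr rfl fun s' _ => ?_)
    rw [abs_mul, abs_of_nonneg (hK0 s s')]
  _ ≤ ∑ s', K s s' * dist V W := by
    gcongr with s'
    · exact hK0 s s'
    · exact (Real.dist_eq _ _).symm.trans_le (dist_le_pi_dist V W s')
  _ ≤ dist V W := by
    rw [← sum_mul]
    exact mul_le_of_le_one_left dist_nonneg (hK1 s)

theorem contractingWith_bellmanEval (R : S → ℝ) {K : S → S → ℝ} (hK0 : ∀ s s', 0 ≤ K s s')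
    (hK1 : ∀ s, ∑ s', K s s' ≤ 1) {γ : ℝ} (hγ : 0 ≤ γ) (hγ1 : γ < 1) :
    ContractingWith ⟨γ, hγ⟩ (bellmanEval R K γ) := by
  refine ⟨hγ1, LipschitzWith.of_dist_le_mul fun V W => (dist_pi_le_iff (by positivity)).2 ?_⟩
  intro s
  rw [Real.dist_eq, bellmanEval, bellmanEval, add_sub_add_left_eq_sub, ← mul_sub, abs_mul,
    abs_of_nonneg hγ]
  exact mul_le_mul_of_nonneg_left (abs_sum_mul_sub_le_dist hK0 hK1 V W s) hγ

theorem mapsTo_bellmanEval_invariantFunctions {B : S → S → Prop} (hB : Equivalence B)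
    {R : S → ℝ} {K : S → S → ℝ} (γ : ℝ) (hR : R ∈ invariantFunctions B)
    (hK : ∀ x y, B x y → ∀ t,
      ∑ s' ∈ univ.filter (fun s' => B t s'), K x s' = ∑ s' ∈ univ.filter (fun s' => B t s'), K y s') :
    Set.MapsTo (bellmanEval R K γ) (invariantFunctions B) (invariantFunctions B) :=
  fun _ hV x y hxy => by
    simp only [bellmanEval, hR x y hxy, sum_mul_eq_of_sum_class_eq hB (hK x y hxy) hV]

end PolicyEvaluation

theorem bisimulation_policy_value_eq_general {S A : Type*} [Fintype S]
    (r : S → A → ℝ) (P : S → A → S → ℝ) (γ : ℝ)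
    (hγ : 0 ≤ γ) (hγ1 : γ < 1)
    (hP : ∀ s a, (∀ s', 0 ≤ P s a s') ∧ ∑ s', P s a s' = 1)
    (B : S → S → Prop) (hB : Equivalence B)
    (hBr : ∀ si sj, B si sj → ∀ a, r si a = r sj a)
    (hBP : ∀ si sj, B si sj → ∀ a (t : S),
      ∑ s' ∈ univ.filter (fun s' => B t s'), P si a s' =
      ∑ s' ∈ univ.filter (fun s' => B t s'), P sj a s')
    (π : S → A) (hπ : ∀ si sj, B si sj → π si = π sj)
    (Vπ : S → ℝ)
    (hV : ∀ s, Vπ s = r s (π s) + γ * ∑ s', P s (π s) s' * Vπ s') :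
    ∀ si sj, B si sj → Vπ si = Vπ sj := by
  have hT : ContractingWith ⟨γ, hγ⟩ (bellmanEval (fun s => r s (π s)) (fun s => P s (π s)) γ) :=
    contractingWith_bellmanEval _ (fun s => (hP s (π s)).1) (fun s => (hP s (π s)).2.le) hγ hγ1
  have hinv := mapsTo_bellmanEval_invariantFunctions (R := fun s => r s (π s))
    (K := fun s => P s (π s)) hB γ (fun x y hxy => by simp only [hπ x y hxy, hBr x y hxy])
    (fun x y hxy => by rw [hπ x y hxy]; exact hBP x y hxy _)
  exact hT.mem_of_isFixedPt isClosed_invariantFunctions hinv ⟨0, zero_mem_invariantFunctions⟩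
    (funext hV).symm

/-- Bisimilar states of a finite MDP have equal value under any `B`-invariant
deterministic policy. -/
theorem bisimulation_policy_value_eq {S A : Type*} [Fintype S] [Fintype A]
    (r : S → A → ℝ) (P : S → A → S → ℝ) (γ : ℝ)
    (hγ : 0 ≤ γ) (hγ1 : γ < 1)
    (hP : ∀ s a, (∀ s', 0 ≤ P s a s') ∧ ∑ s', P s a s' = 1)
    (B : S → S → Prop) (hB : Equivalence B)
    (hBr : ∀ si sj, B si sj → ∀ a, r si a = r sj a)
    (hBP : ∀ si sj, B si sj → ∀ a (t : S),
      ∑ s' ∈ univ.filter (fun s' => B t s'), P si a s' =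
      ∑ s' ∈ univ.filter (fun s' => B t s'), P sj a s')
    (π : S → A) (hπ : ∀ si sj, B si sj → π si = π sj)
    (Vπ : S → ℝ)
    (hV : ∀ s, Vπ s = r s (π s) + γ * ∑ s', P s (π s) s' * Vπ s') :
    ∀ si sj, B si sj → Vπ si = Vπ sj :=
  bisimulation_policy_value_eq_general r P γ hγ hγ1 hP B hB hBr hBP π hπ Vπ hV
end
end

section
/- If d is the bisimulation metric (fixed point of F(d)(sᵢ,sⱼ) = max_a [(1-c)|r(sᵢ,a)-r(sⱼ,a)| + c·W₁(d)(P(sᵢ,a),P(sⱼ,a))]) on a finite MDP, then d(sᵢ,sⱼ) = 0 whenever sᵢ and sⱼ are bisimilar (related by some bisimulation relation). -/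
open Finset
noncomputable section

open scoped Classical

section Aux

variable {S : Type*} [Fintype S]

lemma W1_bddBelow (d : S → S → ℝ) (μ ν : S → ℝ) (m : ℝ) (hm : ∀ x y, m ≤ d x y) :
    BddBelow {v : ℝ | ∃ c : S → S → ℝ, (∀ x y, 0 ≤ c x y) ∧
      (∀ x, ∑ y, c x y = μ x) ∧ (∀ y, ∑ x, c x y = ν y) ∧
      v = ∑ x, ∑ y, d x y * c x y} := by
  refine ⟨m * ∑ x, μ x, ?_⟩
  rintro v ⟨c, hc, hμ, hν, rfl⟩
  calc m * ∑ x, μ x = ∑ x, ∑ y, m * c x y := by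
        rw [Finset.mul_sum]
        exact Finset.sum_congr rfl fun x _ => by rw [← hμ x, Finset.mul_sum]
    _ ≤ ∑ x, ∑ y, d x y * c x y := by
        apply Finset.sum_le_sum; intro x _; apply Finset.sum_le_sum; intro y _
        exact mul_le_mul_of_nonneg_right (hm x y) (hc x y)

lemma le_W1 (d : S → S → ℝ) (μ ν : S → ℝ) (m : ℝ) (hm : ∀ x y, m ≤ d x y)
    (hμ0 : ∀ x, 0 ≤ μ x) (hν0 : ∀ y, 0 ≤ ν y)
    (hμ1 : ∑ x, μ x = 1) (hν1 : ∑ y, ν y = 1) :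
    m ≤ W1 d μ ν := by
  apply le_csInf
  · refine ⟨∑ x, ∑ y, d x y * (μ x * ν y), fun x y => μ x * ν y,
      fun x y => mul_nonneg (hμ0 x) (hν0 y), fun x => ?_, fun y => ?_, rfl⟩
    · rw [← Finset.mul_sum, hν1, mul_one]
    · rw [← Finset.sum_mul, hμ1, one_mul]
  · rintro v ⟨c, hc, hμ, hν, rfl⟩
    calc m = m * ∑ x, μ x := by rw [hμ1, mul_one]
      _ = ∑ x, ∑ y, m * c x y := by
          rw [Finset.mul_sum]
          exact Finset.sum_congr rfl fun x _ => by rw [← hμ x, Finset.mul_sum]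
      _ ≤ ∑ x, ∑ y, d x y * c x y := by
          apply Finset.sum_le_sum; intro x _; apply Finset.sum_le_sum; intro y _
          exact mul_le_mul_of_nonneg_right (hm x y) (hc x y)

lemma W1_le (d : S → S → ℝ) (μ ν : S → ℝ) (m : ℝ) (hm : ∀ x y, m ≤ d x y)
    (c : S → S → ℝ) (hc : ∀ x y, 0 ≤ c x y) (hμ : ∀ x, ∑ y, c x y = μ x)
    (hν : ∀ y, ∑ x, c x y = ν y) :
    W1 d μ ν ≤ ∑ x, ∑ y, d x y * c x y :=
  csInf_le (W1_bddBelow d μ ν m hm) ⟨c, hc, hμ, hν, rfl⟩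

end Aux

/-- The bisimulation metric (fixed point of the action-max bisimulation operator)
vanishes on bisimilar states. -/
theorem bisim_metric_zero_of_bisimilar {S A : Type*} [Fintype S] [Fintype A] [Nonempty A]
    (r : S → A → ℝ) (P : S → A → S → ℝ) (c : ℝ) (hc0 : 0 ≤ c) (hc1 : c < 1)
    (hP : ∀ s a, (∀ s', 0 ≤ P s a s') ∧ ∑ s', P s a s' = 1)
    (d : S → S → ℝ)
    (hfix : ∀ si sj, d si sj =
      ⨆ a, ((1 - c) * |r si a - r sj a| + c * W1 d (P si a) (P sj a)))
    (B : S → S → Prop) (hB : Equivalence B)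
    (hBr : ∀ si sj, B si sj → ∀ a, r si a = r sj a)
    (hBP : ∀ si sj, B si sj → ∀ a (t : S),
      ∑ s' ∈ univ.filter (fun s' => B t s'), P si a s' =
      ∑ s' ∈ univ.filter (fun s' => B t s'), P sj a s') :
    ∀ si sj, B si sj → d si sj = 0 := by
  intro si sj hij
  haveI : Nonempty S := ⟨si⟩
  obtain ⟨p0, -, hp0⟩ := Finset.exists_min_image (univ ×ˢ univ) (fun p => d p.1 p.2)
    (by simp [Finset.univ_nonempty])
  set m := d p0.1 p0.2 with hmdef
  have hmle : ∀ x y, m ≤ d x y := fun x y => hp0 (x, y) (by simp)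
  have hbddA : ∀ u v : S, BddAbove (Set.range fun a =>
      (1 - c) * |r u a - r v a| + c * W1 d (P u a) (P v a)) :=
    fun u v => Set.Finite.bddAbove (Set.finite_range _)
  -- Step 1: d is nonnegative
  have hm0 : 0 ≤ m := by
    obtain ⟨a⟩ := ‹Nonempty A›
    have h2 : (1 - c) * |r p0.1 a - r p0.2 a| + c * W1 d (P p0.1 a) (P p0.2 a)
        ≤ d p0.1 p0.2 := by
      rw [hfix p0.1 p0.2]; exact le_ciSup (hbddA _ _) a
    have h3 : m ≤ W1 d (P p0.1 a) (P p0.2 a) :=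
      le_W1 d _ _ m hmle (hP _ _).1 (hP _ _).1 (hP _ _).2 (hP _ _).2
    have h4 : 0 ≤ (1 - c) * |r p0.1 a - r p0.2 a| :=
      mul_nonneg (by linarith) (abs_nonneg _)
    nlinarith [mul_le_mul_of_nonneg_left h3 hc0]
  have hd0 : ∀ x y, 0 ≤ d x y := fun x y => le_trans hm0 (hmle x y)
  -- Step 2: max over bisimilar pairs
  obtain ⟨q0, hq0mem, hq0⟩ := Finset.exists_max_image
    ((univ ×ˢ univ).filter fun p => B p.1 p.2) (fun p => d p.1 p.2)
    ⟨(si, sj), by simp [hij]⟩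
  set K := d q0.1 q0.2 with hKdef
  have hq0B : B q0.1 q0.2 := by simpa using (Finset.mem_filter.mp hq0mem).2
  have hKle : ∀ x y, B x y → d x y ≤ K := fun x y h => hq0 (x, y) (by simp [h])
  -- Step 3: key estimate on bisimilar pairs
  have key : ∀ u v, B u v → d u v ≤ c * K := by
    intro u v huv
    rw [hfix u v]
    apply ciSup_le
    intro a
    rw [hBr u v huv a, sub_self, abs_zero, mul_zero, zero_add]
    refine mul_le_mul_of_nonneg_left ?_ hc0
    -- show W1 d (P u a) (P v a) ≤ K via an explicit coupling
    set mass : S → ℝ := fun t => ∑ s' ∈ univ.filter (fun s' => B t s'), P v a s' with hmass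
    have hmassu : ∀ t, ∑ s' ∈ univ.filter (fun s' => B t s'), P u a s' = mass t :=
      fun t => hBP u v huv a t
    have hmass0 : ∀ t, 0 ≤ mass t := fun t => Finset.sum_nonneg fun s' _ => (hP v a).1 s'
    have hclass : ∀ x y, B x y →
        (univ.filter fun s' => B x s') = (univ.filter fun s' => B y s') := by
      intro x y h; ext s'
      simp only [Finset.mem_filter, Finset.mem_univ, true_and]
      exact ⟨fun h' => hB.trans (hB.symm h) h', fun h' => hB.trans h h'⟩
    have hzv : ∀ y, mass y = 0 → P v a y = 0 := by
      intro y hy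
      exact (Finset.sum_eq_zero_iff_of_nonneg fun s' _ => (hP v a).1 s').mp hy y
        (by simp [hB.refl y])
    have hzu : ∀ x, mass x = 0 → P u a x = 0 := by
      intro x hx
      have h0 : ∑ s' ∈ univ.filter (fun s' => B x s'), P u a s' = 0 := by
        rw [hmassu]; exact hx
      exact (Finset.sum_eq_zero_iff_of_nonneg fun s' _ => (hP u a).1 s').mp h0 x
        (by simp [hB.refl x])
    set c0 : S → S → ℝ := fun x y =>
      if B x y then P u a x * P v a y / mass x else 0 with hc0def
    have hc0nn : ∀ x y, 0 ≤ c0 x y := by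
      intro x y
      simp only [hc0def]
      split
      · exact div_nonneg (mul_nonneg ((hP u a).1 x) ((hP v a).1 y)) (hmass0 x)
      · exact le_rfl
    have hrow : ∀ x, ∑ y, c0 x y = P u a x := by
      intro x
      have h1 : ∑ y, c0 x y = P u a x / mass x * mass x := by
        simp only [hc0def, hmass]
        rw [← Finset.sum_filter, Finset.mul_sum]
        exact Finset.sum_congr rfl fun y _ => by ring
      rcases eq_or_ne (mass x) 0 with h | h
      · rw [h1, h, mul_zero, hzu x h]
      · rw [h1, div_mul_cancel₀ _ h]
    have hcol : ∀ y, ∑ x, c0 x y = P v a y := by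
      intro y
      have heq : ∀ x, c0 x y = if B y x then P u a x * (P v a y / mass y) else 0 := by
        intro x
        simp only [hc0def]
        by_cases h : B x y
        · rw [if_pos h, if_pos (hB.symm h)]
          have hmxy : mass x = mass y := by
            simp only [hmass]; rw [hclass x y h]
          rw [hmxy]; ring
        · rw [if_neg h, if_neg (fun h' => h (hB.symm h'))]
      calc ∑ x, c0 x y
          = ∑ x ∈ univ.filter (fun x => B y x), P u a x * (P v a y / mass y) := by
            simp only [heq]; rw [← Finset.sum_filter]
        _ = P v a y / mass y * ∑ x ∈ univ.filter (fun x => B y x), P u a x := by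
            rw [Finset.mul_sum]
            exact Finset.sum_congr rfl fun x _ => by ring
        _ = P v a y / mass y * mass y := by rw [hmassu y]
        _ = P v a y := by
            rcases eq_or_ne (mass y) 0 with h | h
            · rw [h, mul_zero, hzv y h]
            · exact div_mul_cancel₀ _ h
    have hcost : ∑ x, ∑ y, d x y * c0 x y ≤ K := by
      calc ∑ x, ∑ y, d x y * c0 x y ≤ ∑ x, ∑ y, K * c0 x y := by
            apply Finset.sum_le_sum; intro x _; apply Finset.sum_le_sum; intro y _
            by_cases h : B x y
            · exact mul_le_mul_of_nonneg_right (hKle x y h) (hc0nn x y)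
            · simp [hc0def, h]
        _ = K * ∑ x, P u a x := by
            rw [Finset.mul_sum]
            exact Finset.sum_congr rfl fun x _ => by rw [← Finset.mul_sum, hrow]
        _ = K := by rw [(hP u a).2, mul_one]
    exact le_trans (W1_le d _ _ m hmle c0 hc0nn hrow hcol) hcost
  -- Step 4: conclude
  have hKc : K ≤ c * K := key q0.1 q0.2 hq0B
  have hK0 : 0 ≤ K := hd0 _ _
  have hKneg : K ≤ 0 := by nlinarith
  have h1 : d si sj ≤ K := hKle si sj hij
  have h2 : 0 ≤ d si sj := hd0 si sj
  linarith
end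
end

section
/- (Value bound from metric closeness) Let d be the bisimulation metric with mixing constant c ∈ (0,1) for a Markov reward process (fixed point of F(d)(sᵢ,sⱼ) = (1-c)|r(sᵢ)-r(sⱼ)| + c·W₁(d)(P(sᵢ),P(sⱼ))), and let V be the value function with discount factor c. Then for any two states sᵢ, sⱼ with d(sᵢ,sⱼ) ≤ η, we have |V(sᵢ) - V(sⱼ)| ≤ η/(1-c). -/
open Finset
noncomputable section

/-!
Write `U = (1 - c) V`, so that `U s = (1 - c) r s + c 𝔼_{P s} U`. Let `M` be the largest
defect `|U x - U y| - d x y` over all pairs. Any coupling of `P a` and `P b` transports the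
differences of `U` at cost at most the coupling cost plus `M`, so the easy half of
Kantorovich duality together with the fixed-point equation for `d` gives
`|U a - U b| ≤ d a b + c M` for all `a b`. Taking the worst pair, `M ≤ c M`, hence `M ≤ 0`:
`U` is `1`-Lipschitz for `d`, i.e. `(1 - c) |V si - V sj| ≤ d si sj ≤ η`.
-/

section Wasserstein

variable {S : Type*} [Fintype S] {d : S → S → ℝ} {μ ν : S → ℝ} {f : S → ℝ} {K : ℝ}

theorem abs_sum_mul_sub_le_coupling_cost_add {γ : S → S → ℝ} (hγ : ∀ x y, 0 ≤ γ x y)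
    (hγμ : ∀ x, ∑ y, γ x y = μ x) (hγν : ∀ y, ∑ x, γ x y = ν y) (hμ : ∑ x, μ x = 1)
    (hf : ∀ x y, |f x - f y| ≤ d x y + K) :
    |∑ x, μ x * f x - ∑ y, ν y * f y| ≤ ∑ x, ∑ y, d x y * γ x y + K := by
  have hmass : ∑ x, ∑ y, γ x y = 1 := by simp only [hγμ, hμ]
  have htransport : ∑ x, μ x * f x - ∑ y, ν y * f y = ∑ x, ∑ y, γ x y * (f x - f y) := by
    simp only [← hγμ, ← hγν, sum_mul, mul_sub, sum_sub_distrib]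
    rw [sum_comm (f := fun y x => γ x y * f y)]
  calc |∑ x, μ x * f x - ∑ y, ν y * f y|
      ≤ ∑ x, ∑ y, γ x y * |f x - f y| := by
        rw [htransport]
        refine (abs_sum_le_sum_abs _ _).trans (sum_le_sum fun x _ => ?_)
        refine (abs_sum_le_sum_abs _ _).trans_eq (sum_congr rfl fun y _ => ?_)
        rw [abs_mul, abs_of_nonneg (hγ x y)]
    _ ≤ ∑ x, ∑ y, γ x y * (d x y + K) :=
        sum_le_sum fun x _ => sum_le_sum fun y _ => mul_le_mul_of_nonneg_left (hf x y) (hγ x y)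
    _ = ∑ x, ∑ y, d x y * γ x y + K := by
        simp only [mul_add, sum_add_distrib, ← sum_mul, hmass, one_mul, mul_comm (γ _ _) (d _ _)]

theorem abs_sum_mul_sub_le_W1_add (hμ0 : ∀ x, 0 ≤ μ x) (hμ1 : ∑ x, μ x = 1)
    (hν0 : ∀ y, 0 ≤ ν y) (hν1 : ∑ y, ν y = 1) (hf : ∀ x y, |f x - f y| ≤ d x y + K) :
    |∑ x, μ x * f x - ∑ y, ν y * f y| ≤ W1 d μ ν + K := by
  have hprod : ∑ x, ∑ y, d x y * (μ x * ν y) ∈ {v : ℝ | ∃ γ : S → S → ℝ, (∀ x y, 0 ≤ γ x y) ∧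
      (∀ x, ∑ y, γ x y = μ x) ∧ (∀ y, ∑ x, γ x y = ν y) ∧ v = ∑ x, ∑ y, d x y * γ x y} :=
    ⟨fun x y => μ x * ν y, fun x y => mul_nonneg (hμ0 x) (hν0 y),
      fun x => by rw [← mul_sum, hν1, mul_one], fun y => by rw [← sum_mul, hμ1, one_mul], rfl⟩
  rw [← sub_le_iff_le_add]
  refine le_csInf ⟨_, hprod⟩ ?_
  rintro _ ⟨γ, hγ, hγμ, hγν, rfl⟩
  exact sub_le_iff_le_add.mpr (abs_sum_mul_sub_le_coupling_cost_add hγ hγμ hγν hμ1 hf)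

end Wasserstein

section Bisimulation

variable {S : Type*} [Fintype S] {r : S → ℝ} {P : S → S → ℝ} {c : ℝ} {d : S → S → ℝ}
  {U : S → ℝ}

theorem abs_sub_le_add_mul_of_bellman (hc0 : 0 ≤ c) (hc1 : c ≤ 1)
    (hP : ∀ s, (∀ s', 0 ≤ P s s') ∧ ∑ s', P s s' = 1)
    (hfix : ∀ si sj, d si sj = (1 - c) * |r si - r sj| + c * W1 d (P si) (P sj))
    (hU : ∀ s, U s = (1 - c) * r s + c * ∑ s', P s s' * U s') {M : ℝ}
    (hM : ∀ x y, |U x - U y| ≤ d x y + M) (a b : S) :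
    |U a - U b| ≤ d a b + c * M := by
  have hW := abs_sum_mul_sub_le_W1_add (hP a).1 (hP a).2 (hP b).1 (hP b).2 hM
  have hsplit : U a - U b
      = (1 - c) * (r a - r b) + c * (∑ s', P a s' * U s' - ∑ s', P b s' * U s') := by
    rw [hU a, hU b]; ring
  calc |U a - U b|
      ≤ (1 - c) * |r a - r b| + c * |∑ s', P a s' * U s' - ∑ s', P b s' * U s'| := by
        rw [hsplit]
        refine (abs_add_le _ _).trans_eq ?_
        rw [abs_mul, abs_mul, abs_of_nonneg (sub_nonneg.mpr hc1), abs_of_nonneg hc0]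
    _ ≤ (1 - c) * |r a - r b| + c * (W1 d (P a) (P b) + M) :=
        add_le_add_right (mul_le_mul_of_nonneg_left hW hc0) _
    _ = d a b + c * M := by rw [hfix a b]; ring

theorem abs_sub_le_of_bellman (hc0 : 0 ≤ c) (hc1 : c < 1)
    (hP : ∀ s, (∀ s', 0 ≤ P s s') ∧ ∑ s', P s s' = 1)
    (hfix : ∀ si sj, d si sj = (1 - c) * |r si - r sj| + c * W1 d (P si) (P sj))
    (hU : ∀ s, U s = (1 - c) * r s + c * ∑ s', P s s' * U s') (a b : S) :
    |U a - U b| ≤ d a b := by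
  obtain ⟨p, -, hp⟩ := exists_max_image univ (fun q : S × S => |U q.1 - U q.2| - d q.1 q.2)
    ⟨(a, b), mem_univ _⟩
  set M := |U p.1 - U p.2| - d p.1 p.2
  have hM : ∀ x y, |U x - U y| ≤ d x y + M := fun x y => by
    linarith [hp (x, y) (mem_univ _)]
  have hMc : M ≤ c * M := by
    linarith [abs_sub_le_add_mul_of_bellman hc0 hc1.le hP hfix hU hM p.1 p.2]
  have hM0 : M ≤ 0 := by nlinarith
  linarith [hM a b]

end Bisimulation

theorem value_bound_from_bisim_metric_general {S : Type*} [Fintype S]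
    (r : S → ℝ) (P : S → S → ℝ) (c : ℝ) (hc0 : 0 < c) (hc1 : c < 1)
    (hP : ∀ s, (∀ s', 0 ≤ P s s') ∧ ∑ s', P s s' = 1)
    (d : S → S → ℝ)
    (hfix : ∀ si sj, d si sj = (1 - c) * |r si - r sj| + c * W1 d (P si) (P sj))
    (V : S → ℝ) (hV : ∀ s, V s = r s + c * ∑ s', P s s' * V s')
    (η : ℝ) (si sj : S) (hη : d si sj ≤ η) :
    |V si - V sj| ≤ η / (1 - c) := by
  have hc : 0 < 1 - c := sub_pos.mpr hc1
  have hU : ∀ s, (1 - c) * V s = (1 - c) * r s + c * ∑ s', P s s' * ((1 - c) * V s') := by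
    intro s
    simp only [mul_left_comm _ (1 - c), ← mul_sum]
    rw [hV s]; ring
  have hLip := abs_sub_le_of_bellman hc0.le hc1 hP hfix hU si sj
  rw [← mul_sub, abs_mul, abs_of_pos hc] at hLip
  rw [le_div_iff₀' hc]
  linarith

/-- Value bound from metric closeness: states within `η` in the bisimulation
metric have values within `η/(1-c)`. -/
theorem value_bound_from_bisim_metric {S : Type*} [Fintype S] [Nonempty S]
    (r : S → ℝ) (P : S → S → ℝ) (c Rmax : ℝ) (hc0 : 0 < c) (hc1 : c < 1)
    (hr : ∀ s, 0 ≤ r s ∧ r s ≤ Rmax)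
    (hP : ∀ s, (∀ s', 0 ≤ P s s') ∧ ∑ s', P s s' = 1)
    (d : S → S → ℝ)
    (hfix : ∀ si sj, d si sj = (1 - c) * |r si - r sj| + c * W1 d (P si) (P sj))
    (V : S → ℝ) (hV : ∀ s, V s = r s + c * ∑ s', P s s' * V s')
    (η : ℝ) (si sj : S) (hη : d si sj ≤ η) :
    |V si - V sj| ≤ η / (1 - c) :=
  value_bound_from_bisim_metric_general r P c hc0 hc1 hP d hfix V hV η si sj hη
end
end

section
/- (Performance difference via advantage) For a finite MDP and two policies π, π', the difference in discounted returns satisfies J^{π'} - J^π = (1/(1-γ)) · E_{s ∼ ρ^{π'}, a ∼ π'(s)}[A^π(s,a)], where ρ^{π'} is the normalized discounted state-occupancy distribution of π' and A^π(s,a) = Q^π(s,a) - V^π(s) is the advantage function. -/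
/-!
Subtracting the Bellman relations of `π'` and of the baseline `Vπ` shows that `D = Vπ' - Vπ`
solves `D = g + γ K D`, where `K` is the state-transition matrix of `π'` and `g` the
`π'`-expected advantage. Unrolling this along the state distributions `μ t = ρ₀ Kᵗ` gives
`ρ₀ ⬝ D = ∑_{t<N} γᵗ (μ t ⬝ g) + γᴺ (μ N ⬝ D)`. A stochastic matrix does not increase `ℓ¹` norms,
so the remainder tends to zero, and the limit series is the occupancy `ρ / (1 - γ)` tested
against `g`.
-/

open Finset Filter Topology Matrix

namespace Matrix

variable {n : Type*} [Fintype n]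

lemma abs_dotProduct_le (v w : n → ℝ) : |v ⬝ᵥ w| ≤ (∑ i, |v i|) * ‖w‖ := by
  rw [sum_mul]
  refine (abs_sum_le_sum_abs _ _).trans (sum_le_sum fun i _ => ?_)
  rw [abs_mul]
  exact mul_le_mul_of_nonneg_left (norm_le_pi_norm w i) (abs_nonneg _)

variable [DecidableEq n]

lemma eq_vecMul_pow_of_succ {M : Matrix n n ℝ} {x : n → ℝ} {μ : ℕ → n → ℝ} (h0 : μ 0 = x)
    (hsucc : ∀ t, μ (t + 1) = μ t ᵥ* M) (t : ℕ) : μ t = x ᵥ* M ^ t := by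
  induction t with
  | zero => simp [h0]
  | succ t ih => rw [hsucc, ih, vecMul_vecMul, pow_succ]

lemma sum_abs_vecMul_le_of_mem_rowStochastic {M : Matrix n n ℝ}
    (hM : M ∈ rowStochastic ℝ n) (x : n → ℝ) : ∑ j, |(x ᵥ* M) j| ≤ ∑ i, |x i| :=
  calc ∑ j, |(x ᵥ* M) j| ≤ ∑ j, ∑ i, |x i| * M i j :=
        sum_le_sum fun j _ => (abs_sum_le_sum_abs _ _).trans_eq <| sum_congr rfl fun i _ => by
          rw [abs_mul, abs_of_nonneg (nonneg_of_mem_rowStochastic hM)]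
    _ = ∑ i, |x i| := by
        rw [sum_comm]
        simp_rw [← mul_sum, sum_row_of_mem_rowStochastic hM, mul_one]

lemma summable_pow_mul_vecMul_pow_apply {M : Matrix n n ℝ} (hM : M ∈ rowStochastic ℝ n)
    {γ : ℝ} (hγ0 : 0 ≤ γ) (hγ1 : γ < 1) (x : n → ℝ) (j : n) :
    Summable fun t : ℕ => γ ^ t * (x ᵥ* M ^ t) j := by
  refine .of_norm_bounded ((summable_geometric_of_lt_one hγ0 hγ1).mul_right (∑ i, |x i|))
    fun t => ?_
  rw [Real.norm_eq_abs, abs_mul, abs_of_nonneg (pow_nonneg hγ0 t)]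
  gcongr
  exact (single_le_sum (fun j _ => abs_nonneg ((x ᵥ* M ^ t) j)) (mem_univ j)).trans
    (sum_abs_vecMul_le_of_mem_rowStochastic (pow_mem hM t) x)

lemma dotProduct_eq_sum_range_add_of_eq_add_smul_mulVec {M : Matrix n n ℝ} {γ : ℝ}
    {g D : n → ℝ} (hD : D = g + γ • M *ᵥ D) (x : n → ℝ) (N : ℕ) :
    x ⬝ᵥ D = ∑ t ∈ range N, γ ^ t * (x ᵥ* M ^ t ⬝ᵥ g) + γ ^ N * (x ᵥ* M ^ N ⬝ᵥ D) := by
  induction N with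
  | zero => simp
  | succ N ih =>
    have hstep : x ᵥ* M ^ N ⬝ᵥ D = x ᵥ* M ^ N ⬝ᵥ g + γ * (x ᵥ* M ^ (N + 1) ⬝ᵥ D) := by
      conv_lhs => rw [hD]
      rw [dotProduct_add, dotProduct_smul, dotProduct_mulVec, vecMul_vecMul, ← pow_succ,
        smul_eq_mul]
    rw [ih, hstep, sum_range_succ]
    ring

lemma hasSum_pow_mul_vecMul_pow_dotProduct {M : Matrix n n ℝ} (hM : M ∈ rowStochastic ℝ n)
    {γ : ℝ} (hγ0 : 0 ≤ γ) (hγ1 : γ < 1) {g D : n → ℝ} (hD : D = g + γ • M *ᵥ D)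
    (x : n → ℝ) : HasSum (fun t : ℕ => γ ^ t * (x ᵥ* M ^ t ⬝ᵥ g)) (x ⬝ᵥ D) := by
  have hsummable : Summable fun t : ℕ => γ ^ t * (x ᵥ* M ^ t ⬝ᵥ g) := by
    simp_rw [dotProduct, mul_sum, ← mul_assoc]
    exact summable_sum fun j _ =>
      (summable_pow_mul_vecMul_pow_apply hM hγ0 hγ1 x j).mul_right (g j)
  have hremainder : Tendsto (fun N : ℕ => γ ^ N * (x ᵥ* M ^ N ⬝ᵥ D)) atTop (𝓝 0) := by
    refine squeeze_zero_norm (a := fun N => (∑ i, |x i|) * ‖D‖ * γ ^ N) (fun N => ?_) ?_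
    · rw [Real.norm_eq_abs, abs_mul, abs_of_nonneg (pow_nonneg hγ0 N), mul_comm]
      gcongr
      exact (abs_dotProduct_le _ _).trans <| mul_le_mul_of_nonneg_right
        (sum_abs_vecMul_le_of_mem_rowStochastic (pow_mem hM N) x) (norm_nonneg _)
    · simpa using (tendsto_pow_atTop_nhds_zero_of_lt_one hγ0 hγ1).const_mul _
  have hpartial := (tendsto_const_nhds (x := x ⬝ᵥ D)).sub hremainder
  rw [sub_zero] at hpartial
  rw [hsummable.hasSum_iff_tendsto_nat]
  refine hpartial.congr fun N => ?_
  rw [dotProduct_eq_sum_range_add_of_eq_add_smul_mulVec hD x N]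
  ring

lemma sum_tsum_pow_mul_vecMul_pow_mul {M : Matrix n n ℝ} (hM : M ∈ rowStochastic ℝ n)
    {γ : ℝ} (hγ0 : 0 ≤ γ) (hγ1 : γ < 1) {g D : n → ℝ} (hD : D = g + γ • M *ᵥ D)
    (x : n → ℝ) : ∑ j, (∑' t : ℕ, γ ^ t * (x ᵥ* M ^ t) j) * g j = x ⬝ᵥ D := by
  rw [← (hasSum_pow_mul_vecMul_pow_dotProduct hM hγ0 hγ1 hD x).tsum_eq]
  simp_rw [← tsum_mul_right]
  rw [← Summable.tsum_finsetSum fun j _ =>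
      (summable_pow_mul_vecMul_pow_apply hM hγ0 hγ1 x j).mul_right (g j)]
  simp_rw [dotProduct, mul_sum, mul_assoc]

end Matrix

section MDP

variable {S A : Type*} [Fintype S] [Fintype A]

def policyKernel (π : S → A → ℝ) (P : S → A → S → ℝ) : Matrix S S ℝ :=
  Matrix.of fun s s' => ∑ a, π s a * P s a s'

lemma vecMul_policyKernel (π : S → A → ℝ) (P : S → A → S → ℝ) (ν : S → ℝ) (s' : S) :
    (ν ᵥ* policyKernel π P) s' = ∑ s, ∑ a, ν s * π s a * P s a s' := by
  simp only [vecMul, dotProduct, policyKernel, Matrix.of_apply, mul_sum, mul_assoc]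

lemma policyKernel_mem_rowStochastic [DecidableEq S] {π : S → A → ℝ} {P : S → A → S → ℝ}
    (hP : ∀ s a, (∀ s', 0 ≤ P s a s') ∧ ∑ s', P s a s' = 1)
    (hπ : ∀ s, (∀ a, 0 ≤ π s a) ∧ ∑ a, π s a = 1) :
    policyKernel π P ∈ Matrix.rowStochastic ℝ S := by
  refine mem_rowStochastic_iff_sum.2 ⟨fun s s' => ?_, fun s => ?_⟩
  · exact sum_nonneg fun a _ => mul_nonneg ((hπ s).1 a) ((hP s a).1 s')
  · simp only [policyKernel, Matrix.of_apply]
    rw [sum_comm]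
    simp_rw [← mul_sum, (hP s _).2, mul_one, (hπ s).2]

lemma value_sub_eq_advantage_add_smul_mulVec {r : S → A → ℝ} {P : S → A → S → ℝ} {γ : ℝ}
    {π' : S → A → ℝ} (hπ' : ∀ s, ∑ a, π' s a = 1) {V V' : S → ℝ} {Q : S → A → ℝ}
    (hQ : ∀ s a, Q s a = r s a + γ * ∑ s', P s a s' * V s')
    (hV' : ∀ s, V' s = ∑ a, π' s a * (r s a + γ * ∑ s', P s a s' * V' s')) :
    V' - V = (fun s => ∑ a, π' s a * (Q s a - V s)) + γ • policyKernel π' P *ᵥ (V' - V) := by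
  funext s
  have hkernel : (policyKernel π' P *ᵥ (V' - V)) s
      = ∑ a, π' s a * ∑ s', P s a s' * (V' s' - V s') := by
    simp only [mulVec, dotProduct, policyKernel, Matrix.of_apply, Pi.sub_apply,
      sum_mul, mul_sum, mul_assoc]
    exact sum_comm
  calc V' s - V s = ∑ a, π' s a * (r s a + γ * ∑ s', P s a s' * V' s') - ∑ a, π' s a * V s := by
        rw [← sum_mul, hπ', one_mul, ← hV']
    _ = ∑ a, π' s a * (Q s a - V s + γ * ∑ s', P s a s' * (V' s' - V s')) := by
        rw [← sum_sub_distrib]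
        refine sum_congr rfl fun a _ => ?_
        simp only [hQ, mul_sub, sum_sub_distrib]
        ring
    _ = _ := by
        rw [Pi.add_apply, Pi.smul_apply, smul_eq_mul, hkernel, mul_sum, ← sum_add_distrib]
        exact sum_congr rfl fun a _ => by ring

end MDP

theorem performance_difference_general {S A : Type*} [Fintype S] [Fintype A]
    (r : S → A → ℝ) (P : S → A → S → ℝ) (ρ₀ : S → ℝ) (γ : ℝ)
    (hγ : 0 ≤ γ) (hγ1 : γ < 1)
    (hP : ∀ s a, (∀ s', 0 ≤ P s a s') ∧ ∑ s', P s a s' = 1)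
    (π' : S → A → ℝ)
    (hπ' : ∀ s, (∀ a, 0 ≤ π' s a) ∧ ∑ a, π' s a = 1)
    -- value and action-value functions of π and π'
    (Vπ Vπ' : S → ℝ) (Qπ : S → A → ℝ)
    (hQπ : ∀ s a, Qπ s a = r s a + γ * ∑ s', P s a s' * Vπ s')
    (hVπ' : ∀ s, Vπ' s = ∑ a, π' s a *
      (r s a + γ * ∑ s', P s a s' * Vπ' s'))
    -- state-distribution iterates of π' and its normalized discounted occupancy
    (μ : ℕ → S → ℝ) (hμ0 : ∀ s, μ 0 s = ρ₀ s)
    (hμ : ∀ t s', μ (t + 1) s' = ∑ s, ∑ a, μ t s * π' s a * P s a s')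
    (ρ : S → ℝ) (hρ : ∀ s, ρ s = (1 - γ) * ∑' t : ℕ, γ ^ t * μ t s) :
    (∑ s, ρ₀ s * Vπ' s) - (∑ s, ρ₀ s * Vπ s) =
      (1 / (1 - γ)) * ∑ s, ρ s * ∑ a, π' s a * (Qπ s a - Vπ s) := by
  classical
  set K := policyKernel π' P
  have hK : K ∈ Matrix.rowStochastic ℝ S := policyKernel_mem_rowStochastic hP hπ'
  have hμK : ∀ t, μ t = ρ₀ ᵥ* K ^ t := Matrix.eq_vecMul_pow_of_succ (funext hμ0)
    fun t => funext fun s' => by rw [hμ, vecMul_policyKernel]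
  have hbellman := value_sub_eq_advantage_add_smul_mulVec (fun s => (hπ' s).2) hQπ hVπ'
  have hγ' : 1 - γ ≠ 0 := sub_ne_zero.2 hγ1.ne'
  calc (∑ s, ρ₀ s * Vπ' s) - (∑ s, ρ₀ s * Vπ s) = ρ₀ ⬝ᵥ (Vπ' - Vπ) := by
        simp only [dotProduct, Pi.sub_apply, mul_sub, sum_sub_distrib]
    _ = ∑ s, (∑' t : ℕ, γ ^ t * (ρ₀ ᵥ* K ^ t) s) * ∑ a, π' s a * (Qπ s a - Vπ s) :=
        (Matrix.sum_tsum_pow_mul_vecMul_pow_mul hK hγ hγ1 hbellman ρ₀).symm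
    _ = _ := by
        simp_rw [hρ, ← hμK, mul_assoc, ← mul_sum]
        field_simp

/-- Performance difference lemma: the gap in discounted returns between two
stochastic policies equals the normalized-occupancy-weighted expected advantage. -/
theorem performance_difference {S A : Type*} [Fintype S] [Fintype A]
    (r : S → A → ℝ) (P : S → A → S → ℝ) (ρ₀ : S → ℝ) (γ : ℝ)
    (hγ : 0 ≤ γ) (hγ1 : γ < 1)
    (hP : ∀ s a, (∀ s', 0 ≤ P s a s') ∧ ∑ s', P s a s' = 1)
    (hρ₀ : ∀ s, 0 ≤ ρ₀ s) (hρ₀sum : ∑ s, ρ₀ s = 1)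
    (π π' : S → A → ℝ)
    (hπ : ∀ s, (∀ a, 0 ≤ π s a) ∧ ∑ a, π s a = 1)
    (hπ' : ∀ s, (∀ a, 0 ≤ π' s a) ∧ ∑ a, π' s a = 1)
    -- value and action-value functions of π and π'
    (Vπ Vπ' : S → ℝ) (Qπ : S → A → ℝ)
    (hQπ : ∀ s a, Qπ s a = r s a + γ * ∑ s', P s a s' * Vπ s')
    (hVπ : ∀ s, Vπ s = ∑ a, π s a * Qπ s a)
    (hVπ' : ∀ s, Vπ' s = ∑ a, π' s a *
      (r s a + γ * ∑ s', P s a s' * Vπ' s'))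
    -- state-distribution iterates of π' and its normalized discounted occupancy
    (μ : ℕ → S → ℝ) (hμ0 : ∀ s, μ 0 s = ρ₀ s)
    (hμ : ∀ t s', μ (t + 1) s' = ∑ s, ∑ a, μ t s * π' s a * P s a s')
    (ρ : S → ℝ) (hρ : ∀ s, ρ s = (1 - γ) * ∑' t : ℕ, γ ^ t * μ t s) :
    (∑ s, ρ₀ s * Vπ' s) - (∑ s, ρ₀ s * Vπ s) =
      (1 / (1 - γ)) * ∑ s, ρ s * ∑ a, π' s a * (Qπ s a - Vπ s) :=
  performance_difference_general r P ρ₀ γ hγ hγ1 hP π' hπ' Vπ Vπ' Qπ hQπ hVπ' μ hμ0 hμ ρ hρ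
end

section
/- If d_TV(π₁(s), π₂(s)) ≤ δ for all states s of a finite MDP with rewards in [0, R_max] and discount γ, then the value functions satisfy ‖V^{π₁} - V^{π₂}‖_∞ ≤ 2γδR_max/(1-γ)² + 2δR_max/(1-γ). -/
open Finset

/-!
Let `Q₁(s, a) = r(s, a) + γ ∑ P(s' | s, a) V₁(s')`. Subtracting the two Bellman equations gives
`V₁ - V₂ = ∑ₐ (π₁ - π₂) Q₁ + ∑ₐ π₂ (Q₁ - Q₂)`. By Hölder the first sum is at most
`2δ ‖Q₁‖∞ ≤ 2δ (Rmax + γ ‖V₁‖∞)`, and the second at most `γ ‖V₁ - V₂‖∞`, so that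
`‖V₁ - V₂‖∞ ≤ 2δ (Rmax + γ ‖V₁‖∞) / (1 - γ)`. The same contraction argument applied to a single
Bellman equation gives `‖V₁‖∞ ≤ Rmax / (1 - γ)`.
-/

theorem abs_sum_mul_le_sum_abs_mul {ι : Type*} [Fintype ι] (g f : ι → ℝ) {M : ℝ}
    (hf : ∀ i, |f i| ≤ M) : |∑ i, g i * f i| ≤ (∑ i, |g i|) * M :=
  calc |∑ i, g i * f i| ≤ ∑ i, |g i| * |f i| := by
        simpa only [abs_mul] using abs_sum_le_sum_abs (fun i ↦ g i * f i) univ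
    _ ≤ ∑ i, |g i| * M := by gcongr with i; exact hf i
    _ = (∑ i, |g i|) * M := (sum_mul ..).symm

theorem abs_sum_mul_le_of_mem_stdSimplex {ι : Type*} [Fintype ι] {p : ι → ℝ}
    (hp : p ∈ stdSimplex ℝ ι) (f : ι → ℝ) {M : ℝ} (hf : ∀ i, |f i| ≤ M) :
    |∑ i, p i * f i| ≤ M := by
  have hp_abs : ∑ i, |p i| = 1 := by simpa only [abs_of_nonneg (hp.1 _)] using hp.2
  simpa only [hp_abs, one_mul] using abs_sum_mul_le_sum_abs_mul p f hf

theorem norm_le_div_one_sub_of_abs_le_add_mul_norm {ι : Type*} [Fintype ι] [Nonempty ι]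
    {u : ι → ℝ} {c γ : ℝ} (hγ1 : γ < 1) (hu : ∀ i, |u i| ≤ c + γ * ‖u‖) :
    ‖u‖ ≤ c / (1 - γ) := by
  have h : ‖u‖ ≤ c + γ * ‖u‖ := (pi_norm_le_iff_of_nonempty u).2 hu
  rw [le_div_iff₀ (by linarith)]
  linarith

section Bellman

variable {S A : Type*} [Fintype S] (r : S → A → ℝ) (P : S → A → S → ℝ) (γ : ℝ)

def qValue (V : S → ℝ) (s : S) (a : A) : ℝ :=
  r s a + γ * ∑ s', P s a s' * V s'

variable {r P γ}

theorem abs_qValue_le (hP : ∀ s a, P s a ∈ stdSimplex ℝ S) (hγ : 0 ≤ γ) {Rmax : ℝ}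
    (hr : ∀ s a, |r s a| ≤ Rmax) (V : S → ℝ) (s : S) (a : A) :
    |qValue r P γ V s a| ≤ Rmax + γ * ‖V‖ := by
  have hPV : |∑ s', P s a s' * V s'| ≤ ‖V‖ :=
    abs_sum_mul_le_of_mem_stdSimplex (hP s a) V fun s' ↦ norm_le_pi_norm V s'
  calc |qValue r P γ V s a| ≤ |r s a| + γ * |∑ s', P s a s' * V s'| := by
        simpa only [qValue, abs_mul, abs_of_nonneg hγ] using
          abs_add_le (r s a) (γ * ∑ s', P s a s' * V s')
    _ ≤ Rmax + γ * ‖V‖ := by gcongr; exact hr s a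

theorem abs_qValue_sub_qValue_le (hP : ∀ s a, P s a ∈ stdSimplex ℝ S) (hγ : 0 ≤ γ)
    (V W : S → ℝ) (s : S) (a : A) :
    |qValue r P γ V s a - qValue r P γ W s a| ≤ γ * ‖V - W‖ := by
  have hsub : qValue r P γ V s a - qValue r P γ W s a = γ * ∑ s', P s a s' * (V - W) s' := by
    simp only [qValue, Pi.sub_apply, mul_sub, sum_sub_distrib]
    ring
  rw [hsub, abs_mul, abs_of_nonneg hγ]
  gcongr
  exact abs_sum_mul_le_of_mem_stdSimplex (hP s a) _ fun s' ↦ norm_le_pi_norm (V - W) s'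

variable [Fintype A]

theorem norm_value_le [Nonempty S] (hP : ∀ s a, P s a ∈ stdSimplex ℝ S) (hγ : 0 ≤ γ)
    (hγ1 : γ < 1) {Rmax : ℝ} (hr : ∀ s a, |r s a| ≤ Rmax) {π : S → A → ℝ}
    (hπ : ∀ s, π s ∈ stdSimplex ℝ A) {V : S → ℝ}
    (hV : ∀ s, V s = ∑ a, π s a * qValue r P γ V s a) :
    ‖V‖ ≤ Rmax / (1 - γ) :=
  norm_le_div_one_sub_of_abs_le_add_mul_norm hγ1 fun s ↦ by
    rw [hV s]
    exact abs_sum_mul_le_of_mem_stdSimplex (hπ s) _ (abs_qValue_le hP hγ hr V s)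

/-- The performance difference identity for two policies and their value functions. -/
theorem value_sub_value_eq {π₁ π₂ : S → A → ℝ} {V₁ V₂ : S → ℝ}
    (hV₁ : ∀ s, V₁ s = ∑ a, π₁ s a * qValue r P γ V₁ s a)
    (hV₂ : ∀ s, V₂ s = ∑ a, π₂ s a * qValue r P γ V₂ s a) (s : S) :
    V₁ s - V₂ s = ∑ a, (π₁ s a - π₂ s a) * qValue r P γ V₁ s a +
      ∑ a, π₂ s a * (qValue r P γ V₁ s a - qValue r P γ V₂ s a) := by
  rw [hV₁ s, hV₂ s, ← sum_add_distrib, ← sum_sub_distrib]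
  exact sum_congr rfl fun a _ ↦ by ring

theorem norm_value_sub_value_le [Nonempty S] (hP : ∀ s a, P s a ∈ stdSimplex ℝ S)
    (hγ : 0 ≤ γ) (hγ1 : γ < 1) {Rmax δ : ℝ} (hR : 0 ≤ Rmax) (hr : ∀ s a, |r s a| ≤ Rmax)
    {π₁ π₂ : S → A → ℝ} (hπ₂ : ∀ s, π₂ s ∈ stdSimplex ℝ A)
    (hTV : ∀ s, (1 / 2) * ∑ a, |π₁ s a - π₂ s a| ≤ δ) {V₁ V₂ : S → ℝ}
    (hV₁ : ∀ s, V₁ s = ∑ a, π₁ s a * qValue r P γ V₁ s a)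
    (hV₂ : ∀ s, V₂ s = ∑ a, π₂ s a * qValue r P γ V₂ s a) :
    ‖V₁ - V₂‖ ≤ 2 * δ * (Rmax + γ * ‖V₁‖) / (1 - γ) := by
  refine norm_le_div_one_sub_of_abs_le_add_mul_norm hγ1 fun s ↦ ?_
  have hQ₁ : 0 ≤ Rmax + γ * ‖V₁‖ := by positivity
  have hpolicy : |∑ a, (π₁ s a - π₂ s a) * qValue r P γ V₁ s a| ≤ 2 * δ * (Rmax + γ * ‖V₁‖) :=
    calc _ ≤ (∑ a, |π₁ s a - π₂ s a|) * (Rmax + γ * ‖V₁‖) :=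
          abs_sum_mul_le_sum_abs_mul _ _ (abs_qValue_le hP hγ hr V₁ s)
      _ ≤ 2 * δ * (Rmax + γ * ‖V₁‖) := by gcongr; linarith [hTV s]
  have hvalue : |∑ a, π₂ s a * (qValue r P γ V₁ s a - qValue r P γ V₂ s a)| ≤ γ * ‖V₁ - V₂‖ :=
    abs_sum_mul_le_of_mem_stdSimplex (hπ₂ s) _ (abs_qValue_sub_qValue_le hP hγ V₁ V₂ s)
  rw [Pi.sub_apply, value_sub_value_eq hV₁ hV₂ s]
  exact (abs_add_le _ _).trans (add_le_add hpolicy hvalue)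

end Bellman

/-- If two stochastic policies are pointwise `δ`-close in total variation, their
value functions are uniformly close. -/
theorem value_close_of_policy_tv_close {S A : Type*} [Fintype S] [Fintype A]
    (r : S → A → ℝ) (P : S → A → S → ℝ) (π₁ π₂ : S → A → ℝ)
    (γ Rmax δ : ℝ) (V₁ V₂ : S → ℝ)
    (hγ : 0 ≤ γ) (hγ1 : γ < 1) (hR : 0 ≤ Rmax)
    (hr : ∀ s a, 0 ≤ r s a ∧ r s a ≤ Rmax)
    (hP : ∀ s a, (∀ s', 0 ≤ P s a s') ∧ ∑ s', P s a s' = 1)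
    (hπ₁ : ∀ s, (∀ a, 0 ≤ π₁ s a) ∧ ∑ a, π₁ s a = 1)
    (hπ₂ : ∀ s, (∀ a, 0 ≤ π₂ s a) ∧ ∑ a, π₂ s a = 1)
    (hTV : ∀ s, (1 / 2) * ∑ a, |π₁ s a - π₂ s a| ≤ δ)
    (hV₁ : ∀ s, V₁ s = ∑ a, π₁ s a * (r s a + γ * ∑ s', P s a s' * V₁ s'))
    (hV₂ : ∀ s, V₂ s = ∑ a, π₂ s a * (r s a + γ * ∑ s', P s a s' * V₂ s')) :
    ∀ s, |V₁ s - V₂ s| ≤ 2 * γ * δ * Rmax / (1 - γ) ^ 2 + 2 * δ * Rmax / (1 - γ) := by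
  intro s
  have : Nonempty S := ⟨s⟩
  have hr_abs : ∀ s a, |r s a| ≤ Rmax := fun s a ↦ abs_le.2 ⟨by linarith [hr s a], (hr s a).2⟩
  have hδ : 0 ≤ δ := le_trans (by positivity) (hTV s)
  have hγ' : 0 < 1 - γ := sub_pos.2 hγ1
  have hV₁_le := norm_value_le hP hγ hγ1 hr_abs hπ₁ hV₁
  have hdiff := norm_value_sub_value_le hP hγ hγ1 hR hr_abs hπ₂ hTV hV₁ hV₂
  calc |V₁ s - V₂ s| ≤ ‖V₁ - V₂‖ := norm_le_pi_norm (V₁ - V₂) s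
    _ ≤ 2 * δ * (Rmax + γ * (Rmax / (1 - γ))) / (1 - γ) := by
        refine hdiff.trans ?_
        gcongr
    _ = 2 * γ * δ * Rmax / (1 - γ) ^ 2 + 2 * δ * Rmax / (1 - γ) := by
        field_simp
        ring
end
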